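/- arXiv:2001.06705 — 9 statements merged into one kernel-verified Lean document; each statement's English description precedes it below -/
import Mathlib

section
/- Let t₀, …, tₙ be ternary operations on A satisfying the Gumm equations: x = tₕ(x,y,x) for 1 < h < n; t₀(x,y,z) = x; tₕ(x,z,z) = tₕ₊₁(x,z,z) for even h < n; tₕ(x,x,z) = tₕ₊₁(x,x,z) for odd h < n; tₙ(x,y,z) = z. Define sₕ(x,y,z) = tₕ(x, tₕ(x,y,y), tₕ(x,y,z)) for each h. Then s₀, …, sₙ also satisfy all the Gumm equations. -/
variable {A : Type*}

/-- Relational composition. -/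
def Comp (R S : A → A → Prop) : A → A → Prop := fun a c => ∃ b, R a b ∧ S b c

/-- Alternating composition `R ∘ S ∘ R ∘ S ∘ …` with `k` factors. -/
def alt : (A → A → Prop) → (A → A → Prop) → ℕ → A → A → Prop
  | _, _, 0 => Eq
  | R, S, k + 1 => Comp R (alt S R k)

/-- `m`-fold relational composition `R ∘ R ∘ … ∘ R`. -/
def relPow (R : A → A → Prop) (m : ℕ) : A → A → Prop := alt R R m

/-- A binary relation is compatible with a ternary operation. -/
def Compat3 (Θ : A → A → Prop) (f : A → A → A → A) : Prop :=
  ∀ a a' b b' c c', Θ a a' → Θ b b' → Θ c c' → Θ (f a b c) (f a' b' c')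

/-- Join of equivalence relations: transitive closure of the union. -/
def Join (R S : A → A → Prop) : A → A → Prop :=
  Relation.TransGen (fun a b => R a b ∨ S a b)

/-- The Gumm equations (G1), (A2)-(A5). -/
def GummSeq (n : ℕ) (t : ℕ → A → A → A → A) : Prop :=
  (∀ h, 1 < h → h < n → ∀ x y, t h x y x = x) ∧
  (∀ x y z, t 0 x y z = x) ∧
  (∀ h, h < n → Even h → ∀ x z, t h x z z = t (h + 1) x z z) ∧
  (∀ h, h < n → Odd h → ∀ x z, t h x x z = t (h + 1) x x z) ∧
  (∀ x y z, t n x y z = z)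

/-- The alvin equations (A1)-(A5). -/
def AlvinSeq (n : ℕ) (t : ℕ → A → A → A → A) : Prop :=
  (∀ h, 0 < h → h < n → ∀ x y, t h x y x = x) ∧
  (∀ x y z, t 0 x y z = x) ∧
  (∀ h, h < n → Even h → ∀ x z, t h x z z = t (h + 1) x z z) ∧
  (∀ h, h < n → Odd h → ∀ x z, t h x x z = t (h + 1) x x z) ∧
  (∀ x y z, t n x y z = z)

/-- Converse relation. -/
def conv (R : A → A → Prop) : A → A → Prop := fun a b => R b a

/-- Composition `X 0 ∘ X 1 ∘ … ∘ X (m-1)` of a list of relations. -/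
def chain (X : ℕ → A → A → Prop) : ℕ → A → A → Prop
  | 0 => Eq
  | m + 1 => Comp (chain X m) (X m)

theorem stmt4 {A : Type*} (n : ℕ) (hn : 1 ≤ n) (t : ℕ → A → A → A → A)
    (ht : GummSeq n t) :
    GummSeq n (fun h x y z => t h x (t h x y y) (t h x y z)) := by
  obtain ⟨g1, a2, a4, a5, an⟩ := ht
  have txxx : ∀ h, h ≤ n → ∀ x, t h x x x = x := by
    intro h hh x
    rcases Nat.lt_or_ge h 2 with h2 | h2
    · interval_cases h
      · exact a2 x x x
      · rw [← a4 0 hn Even.zero x x, a2]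
    · rcases eq_or_lt_of_le hh with rfl | hlt
      · exact an x x x
      · exact g1 h h2 hlt x x
  refine ⟨?_, ?_, ?_, ?_, ?_⟩
  · intro h h1 hnn x y
    simp only
    rw [g1 h h1 hnn x y, g1 h h1 hnn]
  · intro x y z; simp only [a2]
  · intro h hh he x z
    simp only
    rw [a4 h hh he x z, a4 h hh he x (t (h+1) x z z)]
  · intro h hh ho x z
    simp only
    rw [txxx h (le_of_lt hh) x, txxx (h+1) hh x, a5 h hh ho x z,
      a5 h hh ho x (t (h+1) x x z)]
  · intro x y z; simp only [an]
end

section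
/- Let t₀, …, tₙ be ternary operations on A satisfying the alvin equations: x = tₕ(x,y,x) for 0 < h < n; t₀(x,y,z) = x; tₕ(x,z,z) = tₕ₊₁(x,z,z) for even h < n; tₕ(x,x,z) = tₕ₊₁(x,x,z) for odd h < n; tₙ(x,y,z) = z. Define sₕ(x,y,z) = tₕ(x, tₕ(x,y,y), tₕ(x,y,z)). Then s₀, …, sₙ also satisfy all the alvin equations. -/
variable {A : Type*}

theorem stmt5 {A : Type*} (n : ℕ) (hn : 1 ≤ n) (t : ℕ → A → A → A → A)
    (ht : AlvinSeq n t) :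
    AlvinSeq n (fun h x y z => t h x (t h x y y) (t h x y z)) := by
  obtain ⟨h1, h2, h3, h4, h5⟩ := ht
  refine ⟨?_, ?_, ?_, ?_, ?_⟩
  · intro h hh0 hhn x y
    simp only
    rw [h1 h hh0 hhn x y, h1 h hh0 hhn]
  · intro x y z; simp only [h2]
  · intro h hhn he x z
    simp only
    rw [h3 h hhn he x z, h3 h hhn he]
  · intro h hhn ho x z
    simp only
    have hx : t h x x x = x := h1 h ho.pos hhn x x
    have hx' : t (h+1) x x x = x := by
      rcases lt_or_eq_of_le (Nat.succ_le_of_lt hhn) with h' | h'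
      · exact h1 (h+1) (Nat.succ_pos h) h' x x
      · rw [show h+1 = n from h']; exact h5 x x x
    rw [hx, hx', h4 h hhn ho x z, h4 h hhn ho]
  · intro x y z; simp only [h5]
end

section
/- Let s₁ : A → A → A → A satisfy s₁(x,y,z) = x whenever y = z (i.e., s₁(x,z,z) = x), and suppose that for every reflexive symmetric binary relation Θ on A compatible with s₁ and all a,c ∈ A with (a,c) ∈ Θᵐ one has (a, s₁(a,a,c)) ∈ Θ. Define s₁*(x,y,z) = s₁(x, s₁(x,y,y), s₁(x,y,z)). Then for every reflexive symmetric Θ compatible with s₁ (hence with s₁*) and all a,c ∈ A with (a,c) ∈ Θᵐ⁺¹, one has (a, s₁*(a,a,c)) ∈ Θ. -/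
variable {A : Type*}

lemma relPow_succ_right {A : Type*} (Θ : A → A → Prop) :
    ∀ m a c, relPow Θ (m + 1) a c → ∃ d, relPow Θ m a d ∧ Θ d c := by
  intro m
  induction m with
  | zero =>
    rintro a c ⟨b, hab, hbc⟩
    exact ⟨a, rfl, hbc ▸ hab⟩
  | succ m ih =>
    rintro a c ⟨b, hab, hbc⟩
    obtain ⟨d, hbd, hdc⟩ := ih b c hbc
    exact ⟨d, ⟨b, hab, hbd⟩, hdc⟩

theorem stmt6 {A : Type*} (m : ℕ) (s1 : A → A → A → A)
    (hid : ∀ x z : A, s1 x z z = x)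
    (H : ∀ Θ : A → A → Prop, Reflexive Θ → Symmetric Θ → Compat3 Θ s1 →
      ∀ a c : A, relPow Θ m a c → Θ a (s1 a a c)) :
    ∀ Θ : A → A → Prop, Reflexive Θ → Symmetric Θ → Compat3 Θ s1 →
      ∀ a c : A, relPow Θ (m + 1) a c →
        Θ a ((fun x y z => s1 x (s1 x y y) (s1 x y z)) a a c) := by
  intro Θ hrefl hsymm hcompat a c hac
  obtain ⟨d, had, hdc⟩ := relPow_succ_right Θ m a c hac
  have h1 : Θ a (s1 a a d) := H Θ hrefl hsymm hcompat a d had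
  simp only []
  rw [hid a a]
  have h2 : Θ (s1 a a d) (s1 a a c) :=
    hcompat a a a a d c (hrefl a) (hrefl a) hdc
  have h3 : Θ (s1 a (s1 a a d) (s1 a a d)) (s1 a a (s1 a a c)) :=
    hcompat a a (s1 a a d) a (s1 a a d) (s1 a a c) (hrefl a) (hsymm h1) h2
  rwa [hid] at h3
end

section
/- Suppose n ≥ 1 and t₀, …, tₙ are ternary operations on A satisfying the Gumm equations (x = tₕ(x,y,x) for 1 < h < n; t₀(x,y,z) = x; tₕ(x,z,z) = tₕ₊₁(x,z,z) for even h < n; tₕ(x,x,z) = tₕ₊₁(x,x,z) for odd h < n; tₙ(x,y,z) = z). Then for every m ≥ 1 there exist ternary operations s₀, …, sₙ on A, each obtained by composition from t₀, …, tₙ and projections, satisfying the same Gumm equations, and such that for every reflexive symmetric binary relation Θ on A compatible with all the tₕ, and all a,c ∈ A: (a,c) ∈ Θᵐ implies (a, s₁(a,a,c)) ∈ Θ. -/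
variable {A : Type*}

/-- Operations obtained by composition from `t 0, …, t n` and projections. -/
inductive Derived (t : ℕ → A → A → A → A) (n : ℕ) : (A → A → A → A) → Prop
  | proj1 : Derived t n fun x _ _ => x
  | proj2 : Derived t n fun _ y _ => y
  | proj3 : Derived t n fun _ _ z => z
  | app (h : ℕ) (hh : h ≤ n) (f g k : A → A → A → A) :
      Derived t n f → Derived t n g → Derived t n k →
      Derived t n fun x y z => t h (f x y z) (g x y z) (k x y z)

namespace Stmt7Aux

variable (t : ℕ → A → A → A → A) (n : ℕ)

/-- The pair of "middle" operations `(M_h, M'_h)` at stage `K`. -/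
def MM : ℕ → ℕ → ((A → A → A → A) × (A → A → A → A))
  | 0, h => (fun x y z => t (h + 1) x z y, fun x y z => t h x z y)
  | (K + 1), h =>
      (fun x y z => t (h + 1) x ((MM K h).1 x y z) ((MM K h).2 x y z),
       fun x y z => t h x ((MM K h).1 x y z) ((MM K h).2 x y z))

/-- The transformed Gumm sequence at stage `K`. -/
def SS : ℕ → ℕ → (A → A → A → A)
  | 0, h => t h
  | (K + 1), h =>
      if 1 = h ∧ 1 < n then fun x y z => t 1 x x (SS K 1 x y z)
      else if 2 ≤ h ∧ h < n then
        if h % 2 = 0 then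
          if h + 1 < n then fun x y z => t h x ((MM t K h).1 x y z) (SS K h x y z)
          else fun x y z => t h x y (SS K h x y z)
        else fun x y z => t h x ((MM t K (h - 1)).2 x y z) (SS K h x y z)
      else t h

lemma SS_succ_def (K h : ℕ) : SS t n (K + 1) h =
    if 1 = h ∧ 1 < n then fun x y z => t 1 x x (SS t n K 1 x y z)
    else if 2 ≤ h ∧ h < n then
      if h % 2 = 0 then
        if h + 1 < n then fun x y z => t h x ((MM t K h).1 x y z) (SS t n K h x y z)
        else fun x y z => t h x y (SS t n K h x y z)
      else fun x y z => t h x ((MM t K (h - 1)).2 x y z) (SS t n K h x y z)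
    else t h := rfl

lemma SS1 (hn2 : 1 < n) (K : ℕ) (x y z : A) :
    SS t n (K + 1) 1 x y z = t 1 x x (SS t n K 1 x y z) := by
  rw [SS_succ_def, if_pos (⟨rfl, hn2⟩ : (1 : ℕ) = 1 ∧ 1 < n)]

lemma SSe (K h : ℕ) (h2 : 2 ≤ h) (hlt : h + 1 < n) (hev : h % 2 = 0) (x y z : A) :
    SS t n (K + 1) h x y z = t h x ((MM t K h).1 x y z) (SS t n K h x y z) := by
  rw [SS_succ_def, if_neg (by omega : ¬(1 = h ∧ 1 < n)),
    if_pos (⟨h2, by omega⟩ : 2 ≤ h ∧ h < n), if_pos hev, if_pos hlt]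

lemma SStop (K h : ℕ) (h2 : 2 ≤ h) (hn' : h < n) (hlt : ¬ h + 1 < n) (hev : h % 2 = 0)
    (x y z : A) : SS t n (K + 1) h x y z = t h x y (SS t n K h x y z) := by
  rw [SS_succ_def, if_neg (by omega : ¬(1 = h ∧ 1 < n)),
    if_pos (⟨h2, hn'⟩ : 2 ≤ h ∧ h < n), if_pos hev, if_neg hlt]

lemma SSo (K h : ℕ) (h2 : 2 ≤ h) (hn' : h < n) (hod : h % 2 = 1) (x y z : A) :
    SS t n (K + 1) h x y z = t h x ((MM t K (h - 1)).2 x y z) (SS t n K h x y z) := by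
  rw [SS_succ_def, if_neg (by omega : ¬(1 = h ∧ 1 < n)),
    if_pos (⟨h2, hn'⟩ : 2 ≤ h ∧ h < n), if_neg (by omega : ¬ h % 2 = 0)]

lemma SSelse (K h : ℕ) (hc : ¬(1 = h ∧ 1 < n)) (hc2 : ¬(2 ≤ h ∧ h < n)) :
    SS t n (K + 1) h = t h := by
  rw [SS_succ_def, if_neg hc, if_neg hc2]

variable {t n}

section Identities

variable (hn : 1 ≤ n) (ht : GummSeq n t)
include hn ht

lemma hE0 : ∀ x w : A, t 1 x w w = x := by
  intro x w
  have h1 := ht.2.2.1 0 (by omega) Even.zero x w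
  rw [ht.2.1] at h1
  exact h1.symm

/-- `SS K 0` is the first projection (propositionally). -/
lemma SS0 : ∀ K, ∀ x y z : A, SS t n K 0 x y z = x := by
  intro K
  cases K with
  | zero => exact ht.2.1
  | succ K =>
      rw [SSelse t n K 0 (by omega) (by omega)]
      exact ht.2.1

/-- `SS K n` is the last projection (propositionally). -/
lemma SSn : ∀ K, ∀ x y z : A, SS t n K n x y z = z := by
  intro K
  cases K with
  | zero => exact ht.2.2.2.2
  | succ K =>
      rw [SSelse t n K n (by omega) (by omega)]
      exact ht.2.2.2.2

/-- The main invariants, by induction on the stage `K`. -/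
lemma inv : ∀ K,
    (∀ h, 2 ≤ h → h < n → ∀ x y : A, SS t n K h x y x = x) ∧
    (∀ x w : A, SS t n K 1 x w w = x) ∧
    (∀ h, h < n → h % 2 = 0 → ∀ x w : A, SS t n K h x w w = SS t n K (h + 1) x w w) ∧
    (∀ h, h < n → h % 2 = 1 → ∀ x z : A, SS t n K h x x z = SS t n K (h + 1) x x z) ∧
    (∀ h, 2 ≤ h → h + 1 < n → ∀ x z : A, (MM t K h).1 x x z = x) ∧
    (∀ h, 2 ≤ h → h + 1 < n → ∀ x z : A, (MM t K h).2 x x z = x) ∧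
    (∀ h, 2 ≤ h → h + 1 < n → h % 2 = 0 → ∀ x w : A, (MM t K h).1 x w w = (MM t K h).2 x w w) ∧
    (∀ h, 2 ≤ h → h + 1 < n → h % 2 = 0 → ∀ x w : A, (MM t K h).1 x w w = SS t n K h x w w)
    := by
  obtain ⟨hG1, hA2, hE, hO, hA5⟩ := ht
  have e0 : ∀ x w : A, t 1 x w w = x := hE0 hn ⟨hG1, hA2, hE, hO, hA5⟩
  have hid : ∀ h, 1 < h → h < n → ∀ x : A, t h x x x = x := fun h h1 h2 x => hG1 h h1 h2 x x
  intro K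
  induction K with
  | zero =>
      refine ⟨fun h h2 hlt x y => hG1 h (by omega) hlt x y,
        fun x w => e0 x w,
        fun h hlt hev x w => hE h hlt (Nat.even_iff.mpr hev) x w,
        fun h hlt hod x z => hO h hlt (Nat.odd_iff.mpr hod) x z,
        fun h h2 hlt x z => hG1 (h + 1) (by omega) hlt x z,
        fun h h2 hlt x z => hG1 h (by omega) (by omega) x z,
        fun h h2 hlt hev x w => (hE h (by omega) (Nat.even_iff.mpr hev) x w).symm,
        fun h h2 hlt hev x w => (hE h (by omega) (Nat.even_iff.mpr hev) x w).symm⟩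
  | succ K IH =>
      obtain ⟨i1, i2, i3, i4, i5, i6, i7, i8⟩ := IH
      -- M invariants first
      have j5 : ∀ h, 2 ≤ h → h + 1 < n → ∀ x z : A, (MM t (K + 1) h).1 x x z = x := by
        intro h h2 hlt x z
        show t (h + 1) x ((MM t K h).1 x x z) ((MM t K h).2 x x z) = x
        rw [i5 h h2 hlt, i6 h h2 hlt]
        exact hid (h + 1) (by omega) hlt x
      have j6 : ∀ h, 2 ≤ h → h + 1 < n → ∀ x z : A, (MM t (K + 1) h).2 x x z = x := by
        intro h h2 hlt x z
        show t h x ((MM t K h).1 x x z) ((MM t K h).2 x x z) = x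
        rw [i5 h h2 hlt, i6 h h2 hlt]
        exact hid h (by omega) (by omega) x
      have j7 : ∀ h, 2 ≤ h → h + 1 < n → h % 2 = 0 →
          ∀ x w : A, (MM t (K + 1) h).1 x w w = (MM t (K + 1) h).2 x w w := by
        intro h h2 hlt hev x w
        show t (h + 1) x ((MM t K h).1 x w w) ((MM t K h).2 x w w)
          = t h x ((MM t K h).1 x w w) ((MM t K h).2 x w w)
        rw [← i7 h h2 hlt hev]
        exact (hE h (by omega) (Nat.even_iff.mpr hev) x ((MM t K h).1 x w w)).symm
      have j8 : ∀ h, 2 ≤ h → h + 1 < n → h % 2 = 0 →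
          ∀ x w : A, (MM t (K + 1) h).1 x w w = SS t n (K + 1) h x w w := by
        intro h h2 hlt hev x w
        rw [SSe t n K h h2 hlt hev]
        show t (h + 1) x ((MM t K h).1 x w w) ((MM t K h).2 x w w)
          = t h x ((MM t K h).1 x w w) (SS t n K h x w w)
        rw [← i7 h h2 hlt hev, ← i8 h h2 hlt hev]
        exact (hE h (by omega) (Nat.even_iff.mpr hev) x ((MM t K h).1 x w w)).symm
      -- I2
      have j2 : ∀ x w : A, SS t n (K + 1) 1 x w w = x := by
        intro x w
        by_cases hn2 : 1 < n
        · rw [SS1 t n hn2, i2 x w]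
          exact e0 x x
        · rw [SSelse t n K 1 (by omega) (by omega)]
          exact e0 x w
      -- I1
      have j1 : ∀ h, 2 ≤ h → h < n → ∀ x y : A, SS t n (K + 1) h x y x = x := by
        intro h h2 hlt x y
        rcases Nat.even_or_odd h with hev | hod
        · have hev' := Nat.even_iff.mp hev
          by_cases htop : h + 1 < n
          · rw [SSe t n K h h2 htop hev', i1 h h2 hlt x y]
            exact hG1 h (by omega) hlt x _
          · rw [SStop t n K h h2 hlt htop hev', i1 h h2 hlt x y]
            exact hG1 h (by omega) hlt x y
        · have hod' := Nat.odd_iff.mp hod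
          rw [SSo t n K h h2 hlt hod', i1 h h2 hlt x y]
          exact hG1 h (by omega) hlt x _
      -- I3 : E-links
      have j3 : ∀ h, h < n → h % 2 = 0 →
          ∀ x w : A, SS t n (K + 1) h x w w = SS t n (K + 1) (h + 1) x w w := by
        intro h hlt hev x w
        rcases Nat.lt_or_ge h 2 with hsm | h2
        · -- h = 0
          have h0 : h = 0 := by omega
          subst h0
          rw [SS0 hn ⟨hG1, hA2, hE, hO, hA5⟩ (K + 1), j2 x w]
        · by_cases htop : h + 1 < n
          · -- paired case
            rw [SSe t n K h h2 htop hev]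
            have hod1 : (h + 1) % 2 = 1 := by omega
            rw [SSo t n K (h + 1) (by omega) htop hod1]
            have e1 : (h + 1 - 1) = h := by omega
            rw [e1]
            rw [← i8 h h2 htop hev, ← i3 h hlt hev x w, ← i8 h h2 htop hev,
              ← i7 h h2 htop hev]
            exact hE h hlt (Nat.even_iff.mpr hev) x ((MM t K h).1 x w w)
          · -- top case : h + 1 = n
            have hn1 : h + 1 = n := by omega
            rw [SStop t n K h h2 hlt htop hev]
            have hsw : SS t n K h x w w = w := by
              rw [i3 h hlt hev x w, hn1]
              exact SSn hn ⟨hG1, hA2, hE, hO, hA5⟩ K x w w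
            rw [hsw]
            have h2' : SS t n (K + 1) (h + 1) x w w = w := by
              rw [hn1]; exact SSn hn ⟨hG1, hA2, hE, hO, hA5⟩ (K + 1) x w w
            rw [h2']
            rw [hE h hlt (Nat.even_iff.mpr hev) x w, hn1]
            exact hA5 x w w
      -- I4 : O-links
      have j4 : ∀ h, h < n → h % 2 = 1 →
          ∀ x z : A, SS t n (K + 1) h x x z = SS t n (K + 1) (h + 1) x x z := by
        intro h hlt hod x z
        -- LHS reduction
        have LHS : SS t n (K + 1) h x x z = t h x x (SS t n K h x x z) := by
          rcases Nat.lt_or_ge h 2 with hsm | h2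
          · have h1 : h = 1 := by omega
            subst h1
            exact SS1 t n (by omega) K x x z
          · rw [SSo t n K h h2 hlt hod]
            congr 1
            exact i6 (h - 1) (by omega) (by omega) x z
        rw [LHS]
        have hτ : SS t n K h x x z = SS t n K (h + 1) x x z := i4 h hlt hod x z
        by_cases htop : h + 1 < n
        · -- h+1 < n : RHS is an even level
          have hev1 : (h + 1) % 2 = 0 := by omega
          have RHS : SS t n (K + 1) (h + 1) x x z = t (h + 1) x x (SS t n K (h + 1) x x z) := by
            by_cases htop2 : h + 2 < n
            · rw [SSe t n K (h + 1) (by omega) (by omega) hev1]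
              congr 1
              exact i5 (h + 1) (by omega) (by omega) x z
            · rw [SStop t n K (h + 1) (by omega) htop (by omega) hev1]
          rw [RHS, ← hτ]
          exact hO h hlt (Nat.odd_iff.mpr hod) x (SS t n K h x x z)
        · -- h + 1 = n
          have hn1 : h + 1 = n := by omega
          have hz : SS t n K h x x z = z := by
            rw [hτ, hn1]
            exact SSn hn ⟨hG1, hA2, hE, hO, hA5⟩ K x x z
          rw [hz]
          have h2' : SS t n (K + 1) (h + 1) x x z = z := by
            rw [hn1]; exact SSn hn ⟨hG1, hA2, hE, hO, hA5⟩ (K + 1) x x z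
          rw [h2']
          rw [hO h hlt (Nat.odd_iff.mpr hod) x z, hn1]
          exact hA5 x x z
      exact ⟨j1, j2, j3, j4, j5, j6, j7, j8⟩

end Identities

/-- The transformed sequence is a Gumm sequence. -/
lemma SS_gumm (hn : 1 ≤ n) (ht : GummSeq n t) (K : ℕ) : GummSeq n (SS t n K) := by
  obtain ⟨j1, j2, j3, j4, _, _, _, _⟩ := inv hn ht K
  refine ⟨fun h h1 h2 x y => j1 h (by omega) h2 x y,
    SS0 hn ht K,
    fun h hlt hev x z => j3 h hlt (Nat.even_iff.mp hev) x z,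
    fun h hlt hod x z => j4 h hlt (Nat.odd_iff.mp hod) x z,
    SSn hn ht K⟩

/-- All members of the transformed sequence are derived operations. -/
lemma MM_derived (K h : ℕ) (hh : h + 1 ≤ n) :
    Derived t n (MM t K h).1 ∧ Derived t n (MM t K h).2 := by
  induction K with
  | zero =>
      constructor
      · exact Derived.app (h + 1) hh _ _ _ Derived.proj1 Derived.proj3 Derived.proj2
      · exact Derived.app h (by omega) _ _ _ Derived.proj1 Derived.proj3 Derived.proj2
  | succ K IH =>
      constructor
      · exact Derived.app (h + 1) hh _ _ _ Derived.proj1 IH.1 IH.2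
      · exact Derived.app h (by omega) _ _ _ Derived.proj1 IH.1 IH.2

lemma SS_derived (K : ℕ) : ∀ h, h ≤ n → Derived t n (SS t n K h) := by
  induction K with
  | zero =>
      intro h hh
      exact Derived.app h hh _ _ _ Derived.proj1 Derived.proj2 Derived.proj3
  | succ K IH =>
      intro h hh
      rw [SS_succ_def]
      by_cases hc : 1 = h ∧ 1 < n
      · rw [if_pos hc]
        exact Derived.app 1 (by omega) _ _ _ Derived.proj1 Derived.proj1 (IH 1 (by omega))
      · rw [if_neg hc]
        by_cases hc2 : 2 ≤ h ∧ h < n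
        · rw [if_pos hc2]
          by_cases hev : h % 2 = 0
          · rw [if_pos hev]
            by_cases hlt : h + 1 < n
            · rw [if_pos hlt]
              exact Derived.app h hh _ _ _ Derived.proj1
                (MM_derived K h (by omega)).1 (IH h hh)
            · rw [if_neg hlt]
              exact Derived.app h hh _ _ _ Derived.proj1 Derived.proj2 (IH h hh)
          · rw [if_neg hev]
            exact Derived.app h hh _ _ _ Derived.proj1
              (MM_derived K (h - 1) (by omega : h - 1 + 1 ≤ n)).2 (IH h hh)
        · rw [if_neg hc2]
          exact Derived.app h hh _ _ _ Derived.proj1 Derived.proj2 Derived.proj3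

section Absorption

variable {Θ : A → A → Prop}
variable (hrefl : Reflexive Θ) (hsym : Symmetric Θ) (hc1 : Compat3 Θ (t 1))
include hrefl hsym hc1

/-- Walking lemma: a `j`-step chain from `d` to `w` gives a `j`-step chain from
`t1 a b d` to `t1 a a w`, provided `Θ a b`. -/
lemma walk : ∀ j, 1 ≤ j → ∀ d w : A, relPow Θ j d w →
    ∀ a b : A, Θ a b → relPow Θ j (t 1 a b d) (t 1 a a w) := by
  intro j
  induction j with
  | zero => omega
  | succ j IH =>
      intro _ d w hdw a b hab
      obtain ⟨e, hde, hew⟩ := hdw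
      rcases Nat.eq_zero_or_pos j with hj0 | hj1
      · subst hj0
        have hew' : e = w := hew
        exact ⟨t 1 a a w, hc1 _ _ _ _ _ _ (hrefl a) (hsym hab) (hew' ▸ hde), rfl⟩
      · exact ⟨t 1 a b e, hc1 _ _ _ _ _ _ (hrefl a) (hrefl b) hde,
          IH hj1 e w hew a b hab⟩

/-- Reduction lemma: one application of `t1 a a ·` absorbs one step. -/
lemma reduce (he0 : ∀ x w : A, t 1 x w w = x) :
    ∀ j, 1 ≤ j → ∀ w : A, relPow Θ (j + 1) a w → relPow Θ j a (t 1 a a w) := by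
  intro j hj w hw
  obtain ⟨b, hab, hbw⟩ := hw
  have h := walk hrefl hsym hc1 j hj b w hbw a b hab
  rwa [he0 a b] at h

/-- Full absorption. -/
lemma absorb (he0 : ∀ x w : A, t 1 x w w = x) {a : A} :
    ∀ j, 1 ≤ j → ∀ w : A, relPow Θ j a w → Θ a ((fun v => t 1 a a v)^[j] w) := by
  intro j
  induction j with
  | zero => omega
  | succ j IH =>
      intro _ w hw
      rcases Nat.eq_zero_or_pos j with hj0 | hj1
      · subst hj0
        obtain ⟨b, hab, hbw⟩ := hw
        have hbw' : b = w := hbw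
        have haw : Θ a w := hbw' ▸ hab
        show Θ a ((fun v => t 1 a a v)^[1] w)
        rw [Function.iterate_one]
        have h := hc1 a a w a w w (hrefl a) (hsym haw) (hrefl w)
        rwa [he0 a w] at h
      · have h2 := reduce hrefl hsym hc1 he0 j hj1 w hw
        have h3 := IH hj1 (t 1 a a w) h2
        rwa [← Function.iterate_succ_apply] at h3

end Absorption

/-- Value of `s 1` at `(a, a, c)`. -/
lemma SS_one_val (hn2 : 1 < n) (a c : A) :
    ∀ K, SS t n K 1 a a c = (fun v => t 1 a a v)^[K + 1] c := by
  intro K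
  induction K with
  | zero =>
      show t 1 a a c = _
      rw [Function.iterate_one]
  | succ K IH =>
      rw [SS1 t n hn2 K, IH]
      exact (Function.iterate_succ_apply' (fun v => t 1 a a v) (K + 1) c).symm

end Stmt7Aux

theorem stmt7 {A : Type*} (n : ℕ) (hn : 1 ≤ n) (t : ℕ → A → A → A → A)
    (ht : GummSeq n t) (m : ℕ) (hm : 1 ≤ m) :
    ∃ s : ℕ → A → A → A → A,
      (∀ h, h ≤ n → Derived t n (s h)) ∧
      GummSeq n s ∧
      ∀ Θ : A → A → Prop, Reflexive Θ → Symmetric Θ →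
        (∀ h, h ≤ n → Compat3 Θ (t h)) →
        ∀ a c : A, relPow Θ m a c → Θ a (s 1 a a c) := by
  classical
  refine ⟨Stmt7Aux.SS t n (m - 1), fun h hh => Stmt7Aux.SS_derived (m - 1) h hh,
    Stmt7Aux.SS_gumm hn ht (m - 1), ?_⟩
  intro Θ hrefl hsym hcompat a c hrel
  have he0 : ∀ x w : A, t 1 x w w = x := Stmt7Aux.hE0 hn ht
  rcases Nat.lt_or_ge 1 n with hn2 | hn1
  · -- n ≥ 2
    rw [Stmt7Aux.SS_one_val hn2 a c (m - 1)]
    have hm1 : m - 1 + 1 = m := by omega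
    rw [hm1]
    exact Stmt7Aux.absorb hrefl hsym (hcompat 1 (by omega)) he0 m hm c hrel
  · -- n = 1 : the algebra is a singleton
    have hn1' : n = 1 := by omega
    have hsub : ∀ x z : A, x = z := by
      intro x z
      have h1 := he0 x z
      have h2 := ht.2.2.2.2 x z z
      rw [hn1'] at h2
      rw [h2] at h1
      exact h1.symm
    have : a = Stmt7Aux.SS t n (m - 1) 1 a a c := hsub _ _
    rw [← this]
    exact hrefl a
end

section
/- Let n ≥ 2 and suppose A belongs to an algebra carrying a Gumm sequence t₀, …, tₙ (equations x = tₕ(x,y,x) for 1 < h < n; t₀(x,y,z) = x; tₕ(x,z,z) = tₕ₊₁(x,z,z) for h even; tₕ(x,x,z) = tₕ₊₁(x,x,z) for h odd; tₙ(x,y,z) = z). Let α, β, γ be equivalence relations on A compatible with each tₕ. Then (β ∘ γ) ∩ (α∩β ⊔ α∩γ) ⊆ (α∩γ) ∘ (α∩β) ∘ … with n alternating factors, where ⊔ denotes the join of equivalence relations (the transitive closure of the union). -/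
variable {A : Type*}

/- ------------------------------------------------------------------ -/
/- Auxiliary material for the proof of `stmt9`.                        -/
/- ------------------------------------------------------------------ -/

/-- Iterated `x ↦ t 2 a a x`. -/
def T2tow (t : ℕ → A → A → A → A) (a : A) : ℕ → A → A
  | 0, x => x
  | m + 1, x => t 2 a a (T2tow t a m x)

/-- Tower with base `b` and step `x ↦ t h a x x`. -/
def Ktow (t : ℕ → A → A → A → A) (a b : A) (h : ℕ) : ℕ → A
  | 0 => b
  | j + 1 => t h a (Ktow t a b h j) (Ktow t a b h j)

/-- Tower with base `c` and step `x ↦ t h a a x`. -/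
def Stow (t : ℕ → A → A → A → A) (a c : A) (h : ℕ) : ℕ → A
  | 0 => c
  | j + 1 => t h a a (Stow t a c h j)

/-- The main tail-witness tower. -/
def Ctow (t : ℕ → A → A → A → A) (a b c : A) (h : ℕ) : ℕ → A
  | 0 => c
  | j + 1 => t h a (Ktow t a b h j) (Ctow t a b c h j)

lemma oddNotEven : ∀ k : ℕ, Odd k → ¬ Even k := by
  intro k hk he
  rw [Nat.even_iff] at he
  rw [Nat.odd_iff] at hk
  omega

lemma alt_of_chain : ∀ (k : ℕ) (R S : A → A → Prop) (x : ℕ → A),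
    (∀ i, i < k → (if Even i then R else S) (x i) (x (i + 1))) →
    alt R S k (x 0) (x k)
  | 0, R, S, x, _ => rfl
  | (k + 1), R, S, x, hx => by
      refine ⟨x 1, ?_, ?_⟩
      · have h0 := hx 0 (Nat.succ_pos k)
        rwa [if_pos Even.zero] at h0
      · refine alt_of_chain k S R (fun i => x (i + 1)) ?_
        intro i hi
        have h2 := hx (i + 1) (Nat.succ_lt_succ hi)
        rcases Nat.even_or_odd i with he | ho
        · have hne : ¬ Even (i + 1) := by
            rw [Nat.even_add_one]; exact fun h => h he
          rw [if_neg hne] at h2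
          rwa [if_pos he]
        · have hno : ¬ Even i := oddNotEven i ho
          have hyes : Even (i + 1) := by rw [Nat.even_add_one]; exact hno
          rw [if_pos hyes] at h2
          rwa [if_neg hno]

theorem stmt9 {A : Type*} (n : ℕ) (hn : 2 ≤ n) (t : ℕ → A → A → A → A)
    (ht : GummSeq n t)
    (α β γ : A → A → Prop)
    (hα : Equivalence α) (hβ : Equivalence β) (hγ : Equivalence γ)
    (hcα : ∀ h, h ≤ n → Compat3 α (t h))
    (hcβ : ∀ h, h ≤ n → Compat3 β (t h))
    (hcγ : ∀ h, h ≤ n → Compat3 γ (t h))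
    (a c : A) (h1 : Comp β γ a c)
    (h2 : Join (fun x y => α x y ∧ β x y) (fun x y => α x y ∧ γ x y) a c) :
    alt (fun x y => α x y ∧ γ x y) (fun x y => α x y ∧ β x y) n a c := by
  obtain ⟨hG1, hA2, hA3, hA4, hA5⟩ := ht
  obtain ⟨b, hab, hbc⟩ := h1
  have h0n : 0 < n := lt_of_lt_of_le (by norm_num) hn
  have h1n : 1 < n := lt_of_lt_of_le (by norm_num) hn
  have h1len : 1 ≤ n := le_of_lt h1n
  -- idempotence of all `t h`, `h ≤ n`
  have idem : ∀ h, h ≤ n → ∀ x, t h x x x = x := by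
    intro h
    induction h with
    | zero => exact fun _ x => hA2 x x x
    | succ h ih =>
      intro hh x
      have hhn : h < n := lt_of_lt_of_le (Nat.lt_succ_self h) hh
      have ihx := ih (le_of_lt hhn) x
      rcases Nat.even_or_odd h with he | ho
      · rw [← hA3 h hhn he x x]; exact ihx
      · rw [← hA4 h hhn ho x x]; exact ihx
  have t1zz : ∀ x z, t 1 x z z = x := by
    intro x z
    rw [← hA3 0 h0n Even.zero x z]
    exact hA2 x z z
  have t1xxz : ∀ x z, t 1 x x z = t 2 x x z := fun x z => hA4 1 h1n odd_one x z
  have cα1 := hcα 1 h1len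
  have cβ1 := hcβ 1 h1len
  have cγ1 := hcγ 1 h1len
  -- `α a c` from the join hypothesis
  have hJα : ∀ z, Join (fun x y => α x y ∧ β x y) (fun x y => α x y ∧ γ x y) a z →
      α a z := by
    intro z hz
    induction hz with
    | single h => exact h.elim (fun h => h.1) (fun h => h.1)
    | tail hp hs ih => exact hα.trans ih (hs.elim (fun h => h.1) (fun h => h.1))
  have hac : α a c := hJα c h2
  -- congruence of the `T2` towers
  have T2cong : ∀ (Θ : A → A → Prop), Equivalence Θ → Compat3 Θ (t 2) →
      ∀ m x y, Θ x y → Θ (T2tow t a m x) (T2tow t a m y) := by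
    intro Θ hΘ hc m
    induction m with
    | zero => exact fun x y h => h
    | succ m ih =>
      intro x y h
      exact hc a a a a _ _ (hΘ.refl a) (hΘ.refl a) (ih x y h)
  have T2α : ∀ m x, α x a → α (T2tow t a m x) a := by
    intro m
    induction m with
    | zero => exact fun x h => h
    | succ m ih =>
      intro x h
      have h1 : α (T2tow t a (m + 1) x) (t 2 a a a) :=
        hcα 2 hn a a a a _ _ (hα.refl a) (hα.refl a) (ih x h)
      rwa [idem 2 hn a] at h1
  have T2n2 : n = 2 → ∀ m x, T2tow t a m x = x := by
    intro hn2 m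
    induction m with
    | zero => exact fun _ => rfl
    | succ m ih =>
      intro x
      have h5 : t 2 a a (T2tow t a m x) = T2tow t a m x := by
        have h5' := hA5 a a (T2tow t a m x)
        rwa [hn2] at h5'
      calc T2tow t a (m + 1) x = t 2 a a (T2tow t a m x) := rfl
        _ = T2tow t a m x := h5
        _ = x := ih x
  -- tower lemmas
  have Kβa : ∀ h, h ≤ n → ∀ j, β (Ktow t a b h j) a := by
    intro h hh j
    induction j with
    | zero => exact hβ.symm hab
    | succ j ih =>
      have h1 : β (Ktow t a b h (j + 1)) (t h a a a) :=
        hcβ h hh a a _ a _ a (hβ.refl a) ih ih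
      rwa [idem h hh a] at h1
  have KγW : ∀ h, h ≤ n → ∀ j, γ (Ktow t a b h j) (Ktow t a c h j) := by
    intro h hh j
    induction j with
    | zero => exact hbc
    | succ j ih =>
      exact hcγ h hh a a _ _ _ _ (hγ.refl a) ih ih
  have Cαa : ∀ h, 1 < h → h < n → ∀ j, α (Ctow t a b c h j) a := by
    intro h hh1 hhn j
    induction j with
    | zero => exact hα.symm hac
    | succ j ih =>
      have h1 : α (Ctow t a b c h (j + 1)) (t h a (Ktow t a b h j) a) :=
        hcα h (le_of_lt hhn) a a _ _ _ a (hα.refl a) (hα.refl _) ih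
      rwa [hG1 h hh1 hhn a (Ktow t a b h j)] at h1
  have CγW : ∀ h, h ≤ n → ∀ j, γ (Ctow t a b c h j) (Ktow t a c h j) := by
    intro h hh j
    induction j with
    | zero => exact hγ.refl c
    | succ j ih =>
      exact hcγ h hh a a _ _ _ _ (hγ.refl a) (KγW h hh j) ih
  have CβS : ∀ h, h ≤ n → ∀ j, β (Ctow t a b c h j) (Stow t a c h j) := by
    intro h hh j
    induction j with
    | zero => exact hβ.refl c
    | succ j ih =>
      exact hcβ h hh a a _ a _ _ (hβ.refl a) (Kβa h hh j) ih
  have Weq : ∀ h, h < n → Even h → ∀ j, Ktow t a c h j = Ktow t a c (h + 1) j := by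
    intro h hhn he j
    induction j with
    | zero => rfl
    | succ j ih =>
      calc Ktow t a c h (j + 1) = t h a (Ktow t a c h j) (Ktow t a c h j) := rfl
        _ = t h a (Ktow t a c (h + 1) j) (Ktow t a c (h + 1) j) := by rw [ih]
        _ = t (h + 1) a (Ktow t a c (h + 1) j) (Ktow t a c (h + 1) j) :=
            hA3 h hhn he a _
        _ = Ktow t a c (h + 1) (j + 1) := rfl
  have Seq : ∀ h, h < n → Odd h → ∀ j, Stow t a c h j = Stow t a c (h + 1) j := by
    intro h hhn ho j
    induction j with
    | zero => rfl
    | succ j ih =>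
      calc Stow t a c h (j + 1) = t h a a (Stow t a c h j) := rfl
        _ = t h a a (Stow t a c (h + 1) j) := by rw [ih]
        _ = t (h + 1) a a (Stow t a c (h + 1) j) := hA4 h hhn ho a _
        _ = Stow t a c (h + 1) (j + 1) := rfl
  have Wlast : ∀ h, h + 1 = n → Even h → ∀ j, Ktow t a c h j = c := by
    intro h hh he j
    have hhn : h < n := by omega
    induction j with
    | zero => rfl
    | succ j ih =>
      calc Ktow t a c h (j + 1) = t h a (Ktow t a c h j) (Ktow t a c h j) := rfl
        _ = t (h + 1) a (Ktow t a c h j) (Ktow t a c h j) := hA3 h hhn he a _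
        _ = t n a (Ktow t a c h j) (Ktow t a c h j) := by rw [hh]
        _ = Ktow t a c h j := hA5 a _ _
        _ = c := ih
  have Slast : ∀ h, h + 1 = n → Odd h → ∀ j, Stow t a c h j = c := by
    intro h hh ho j
    have hhn : h < n := by omega
    induction j with
    | zero => rfl
    | succ j ih =>
      calc Stow t a c h (j + 1) = t h a a (Stow t a c h j) := rfl
        _ = t (h + 1) a a (Stow t a c h j) := hA4 h hhn ho a _
        _ = t n a a (Stow t a c h j) := by rw [hh]
        _ = Stow t a c h j := hA5 a a _
        _ = c := ih
  have T2βC2 : ∀ j, β (T2tow t a j c) (Ctow t a b c 2 j) := by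
    intro j
    induction j with
    | zero => exact hβ.refl c
    | succ j ih =>
      exact hcβ 2 hn a a a _ _ _ (hβ.refl a) (hβ.symm (Kβa 2 hn j)) ih
  -- the invariant carried along the join chain
  set Inv : A → Prop :=
    fun z => ∃ m P, γ P a ∧ α P a ∧ β P (T2tow t a m z) ∧ α z a with hInv
  set Ost : A → Prop :=
    fun z => ∃ m P, β P a ∧ α P a ∧ γ P (T2tow t a m z) ∧ α z a with hOst
  have base : Inv a := ⟨0, a, hγ.refl a, hα.refl a, hβ.refl a, hα.refl a⟩
  have stepγ : ∀ z u, Inv z → α z u → γ z u → Ost u := by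
    intro z u hzI hzuα hzuγ
    obtain ⟨m, P, hPγ, hPα, hPβ, hza⟩ := hzI
    refine ⟨m + 1, t 1 a P (T2tow t a m z), ?_, ?_, ?_, ?_⟩
    · have h1 : β (t 1 a P (T2tow t a m z)) (t 1 a (T2tow t a m z) (T2tow t a m z)) :=
        cβ1 a a P _ _ _ (hβ.refl a) hPβ (hβ.refl _)
      rwa [t1zz a _] at h1
    · have hTa : α (T2tow t a m z) a := T2α m z hza
      have hPT : α P (T2tow t a m z) := hα.trans hPα (hα.symm hTa)
      have h1 : α (t 1 a P (T2tow t a m z)) (t 1 a (T2tow t a m z) (T2tow t a m z)) :=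
        cα1 a a P _ _ _ (hα.refl a) hPT (hα.refl _)
      rwa [t1zz a _] at h1
    · have hTT : γ (T2tow t a m z) (T2tow t a m u) :=
        T2cong γ hγ (hcγ 2 hn) m z u hzuγ
      have h1 : γ (t 1 a P (T2tow t a m z)) (t 1 a a (T2tow t a m u)) :=
        cγ1 a a P a _ _ (hγ.refl a) hPγ hTT
      rwa [t1xxz a _] at h1
    · exact hα.trans (hα.symm hzuα) hza
  have stepβ : ∀ z u, Ost z → α z u → β z u → Inv u := by
    intro z u hzO hzuα hzuβ
    obtain ⟨m, P, hPβ, hPα, hPγ, hza⟩ := hzO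
    refine ⟨m + 1, t 1 a P (T2tow t a m z), ?_, ?_, ?_, ?_⟩
    · have h1 : γ (t 1 a P (T2tow t a m z)) (t 1 a (T2tow t a m z) (T2tow t a m z)) :=
        cγ1 a a P _ _ _ (hγ.refl a) hPγ (hγ.refl _)
      rwa [t1zz a _] at h1
    · have hTa : α (T2tow t a m z) a := T2α m z hza
      have hPT : α P (T2tow t a m z) := hα.trans hPα (hα.symm hTa)
      have h1 : α (t 1 a P (T2tow t a m z)) (t 1 a (T2tow t a m z) (T2tow t a m z)) :=
        cα1 a a P _ _ _ (hα.refl a) hPT (hα.refl _)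
      rwa [t1zz a _] at h1
    · have hTT : β (T2tow t a m z) (T2tow t a m u) :=
        T2cong β hβ (hcβ 2 hn) m z u hzuβ
      have h1 : β (t 1 a P (T2tow t a m z)) (t 1 a a (T2tow t a m u)) :=
        cβ1 a a P a _ _ (hβ.refl a) hPβ hTT
      rwa [t1xxz a _] at h1
    · exact hα.trans (hα.symm hzuα) hza
  have invStep : ∀ z u, Inv z →
      ((α z u ∧ β z u) ∨ (α z u ∧ γ z u)) → Inv u := by
    intro z u hzI hr
    rcases hr with ⟨hzuα, hzuβ⟩ | ⟨hzuα, hzuγ⟩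
    · exact stepβ z u (stepγ z z hzI (hα.refl z) (hγ.refl z)) hzuα hzuβ
    · exact stepβ u u (stepγ z u hzI hzuα hzuγ) (hα.refl u) (hβ.refl u)
  have invAll : ∀ z, Join (fun x y => α x y ∧ β x y) (fun x y => α x y ∧ γ x y) a z →
      Inv z := by
    intro z hz
    induction hz with
    | single h => exact invStep _ _ base h
    | tail hp hs ih => exact invStep _ _ ih hs
  obtain ⟨m, P, hPγ, hPα, hPβ, _⟩ := invAll c h2
  -- final assembly
  set F : ℕ → A :=
    fun h => if h = 0 then a else if h = n then c else
      if h = 1 then P else Ctow t a b c h m with hF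
  have e0 : F 0 = a := by
    rw [hF]
    show (if (0 : ℕ) = 0 then a else if 0 = n then c else
      if (0 : ℕ) = 1 then P else Ctow t a b c 0 m) = a
    rw [if_pos rfl]
  have en : F n = c := by
    rw [hF]
    show (if n = 0 then a else if n = n then c else
      if n = 1 then P else Ctow t a b c n m) = c
    rw [if_neg (by omega : ¬ n = 0), if_pos rfl]
  have e1 : F 1 = P := by
    rw [hF]
    show (if 1 = 0 then a else if 1 = n then c else
      if 1 = 1 then P else Ctow t a b c 1 m) = P
    rw [if_neg (by omega : ¬ (1 : ℕ) = 0), if_neg (by omega : ¬ 1 = n), if_pos rfl]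
  have eh : ∀ h, 2 ≤ h → h < n → F h = Ctow t a b c h m := by
    intro h hh2 hhn
    rw [hF]
    show (if h = 0 then a else if h = n then c else
      if h = 1 then P else Ctow t a b c h m) = Ctow t a b c h m
    rw [if_neg (by omega : ¬ h = 0), if_neg (by omega : ¬ h = n),
      if_neg (by omega : ¬ h = 1)]
  have hlinks : ∀ i, i < n →
      (if Even i then (fun x y => α x y ∧ γ x y) else (fun x y => α x y ∧ β x y))
        (F i) (F (i + 1)) := by
    intro i hi
    rcases Nat.lt_or_ge i 2 with hi2 | hi2
    · interval_cases i
      · -- i = 0 : γ̄-link from a to P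
        rw [if_pos Even.zero, e0, e1]
        exact ⟨hα.symm hPα, hγ.symm hPγ⟩
      · -- i = 1 : β̄-link from P to F 2
        rw [if_neg (oddNotEven 1 odd_one), e1]
        rcases eq_or_lt_of_le hn with hn2 | hn3
        · have e2 : F 2 = c := by rw [hn2]; exact en
          rw [e2]
          constructor
          · exact hα.trans hPα hac
          · have := hPβ
            rwa [T2n2 hn2.symm m c] at this
        · have e2 : F 2 = Ctow t a b c 2 m := eh 2 le_rfl hn3
          rw [e2]
          constructor
          · exact hα.trans hPα (hα.symm (Cαa 2 one_lt_two hn3 m))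
          · exact hβ.trans hPβ (T2βC2 m)
    · -- 2 ≤ i < n
      have ei : F i = Ctow t a b c i m := eh i hi2 hi
      have hαi : α (Ctow t a b c i m) a := Cαa i (by omega) hi m
      rcases Nat.lt_or_ge (i + 1) n with hsn | hsn
      · have ei1 : F (i + 1) = Ctow t a b c (i + 1) m := eh (i + 1) (by omega) hsn
        have hαi1 : α (Ctow t a b c (i + 1) m) a := Cαa (i + 1) (by omega) hsn m
        have hαpair : α (Ctow t a b c i m) (Ctow t a b c (i + 1) m) :=
          hα.trans hαi (hα.symm hαi1)
        rcases Nat.even_or_odd i with he | ho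
        · rw [if_pos he, ei, ei1]
          refine ⟨hαpair, ?_⟩
          have hiW : γ (Ctow t a b c i m) (Ktow t a c i m) := CγW i (le_of_lt hi) m
          rw [Weq i hi he m] at hiW
          exact hγ.trans hiW (hγ.symm (CγW (i + 1) (le_of_lt hsn) m))
        · rw [if_neg (oddNotEven i ho), ei, ei1]
          refine ⟨hαpair, ?_⟩
          have hiS : β (Ctow t a b c i m) (Stow t a c i m) := CβS i (le_of_lt hi) m
          rw [Seq i hi ho m] at hiS
          exact hβ.trans hiS (hβ.symm (CβS (i + 1) (le_of_lt hsn) m))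
      · have hin : i + 1 = n := by omega
        have ei1 : F (i + 1) = c := by rw [hin]; exact en
        rcases Nat.even_or_odd i with he | ho
        · rw [if_pos he, ei, ei1]
          refine ⟨hα.trans hαi hac, ?_⟩
          have hiW : γ (Ctow t a b c i m) (Ktow t a c i m) := CγW i (le_of_lt hi) m
          rwa [Wlast i hin he m] at hiW
        · rw [if_neg (oddNotEven i ho), ei, ei1]
          refine ⟨hα.trans hαi hac, ?_⟩
          have hiS : β (Ctow t a b c i m) (Stow t a c i m) := CβS i (le_of_lt hi) m
          rwa [Slast i hin ho m] at hiS
  have main := alt_of_chain n (fun x y => α x y ∧ γ x y)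
    (fun x y => α x y ∧ β x y) F hlinks
  rwa [e0, en] at main
end

section
/- Let p : A → A → A → A satisfy p(x,y,x) = x, p(x,z,z) = x, and p(x,x,z) = z for all x,y,z ∈ A (a Pixley operation). If α, β, γ are equivalence relations on A compatible with p, then α ∩ (β ∘ γ) ⊆ (α∩γ) ∘ (α∩β). -/
variable {A : Type*}

theorem stmt14 {A : Type*} (p : A → A → A → A)
    (h0 : ∀ x y : A, p x y x = x)
    (h1 : ∀ x z : A, p x z z = x) (h2 : ∀ x z : A, p x x z = z)
    (α β γ : A → A → Prop)
    (hα : Equivalence α) (hβ : Equivalence β) (hγ : Equivalence γ)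
    (hcα : Compat3 α p) (hcβ : Compat3 β p) (hcγ : Compat3 γ p) :
    ∀ a c : A, α a c → Comp β γ a c →
      Comp (fun x y => α x y ∧ γ x y) (fun x y => α x y ∧ β x y) a c := by
  rintro a c hac ⟨b, hab, hbc⟩
  refine ⟨p a b c, ⟨?_, ?_⟩, ?_, ?_⟩
  · have := hcα a a b b a c (hα.refl a) (hα.refl b) hac
    rwa [h0] at this
  · have := hcγ a a b b b c (hγ.refl a) (hγ.refl b) hbc
    rwa [h1] at this
  · have := hcα a a b b a c (hα.refl a) (hα.refl b) hac
    rw [h0] at this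
    exact hα.trans (hα.symm this) hac
  · have := hcβ a a b a c c (hβ.refl a) (hβ.symm hab) (hβ.refl c)
    rwa [h2] at this
end

section
/- Suppose n ≥ 1 and t₀, …, tₙ are ternary operations on A satisfying the alvin equations: x = tₕ(x,y,x) for 0 < h < n; t₀(x,y,z) = x; tₕ(x,z,z) = tₕ₊₁(x,z,z) for h even, 0 ≤ h < n; tₕ(x,x,z) = tₕ₊₁(x,x,z) for h odd, 0 ≤ h < n; tₙ(x,y,z) = z. If α, β, γ are equivalence relations on A compatible with each tₕ, then α ∩ (β ∘ γ) ⊆ (α∩γ) ∘ (α∩β) ∘ … with n alternating factors. -/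
variable {A : Type*}

theorem stmt15 {A : Type*} (n : ℕ) (hn : 1 ≤ n) (t : ℕ → A → A → A → A)
    (ht : AlvinSeq n t)
    (α β γ : A → A → Prop)
    (hα : Equivalence α) (hβ : Equivalence β) (hγ : Equivalence γ)
    (hcα : ∀ h, h ≤ n → Compat3 α (t h))
    (hcβ : ∀ h, h ≤ n → Compat3 β (t h))
    (hcγ : ∀ h, h ≤ n → Compat3 γ (t h)) :
    ∀ a c : A, α a c → Comp β γ a c →
      alt (fun x y => α x y ∧ γ x y) (fun x y => α x y ∧ β x y) n a c := by
  obtain ⟨h1, h2, h3, h4, h5⟩ := ht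
  intro a c hac hcomp
  obtain ⟨b, hab, hbc⟩ := hcomp
  have hz : ∀ h, h ≤ n → α (t h a b c) a := by
    intro h hh
    rcases Nat.eq_zero_or_pos h with h0 | hpos
    · subst h0; rw [h2]; exact hα.refl a
    · rcases lt_or_eq_of_le hh with hlt | heq
      · have := hcα h hh a a b b c a (hα.refl a) (hα.refl b) (hα.symm hac)
        rwa [h1 h hpos hlt] at this
      · subst heq; rw [h5]; exact hα.symm hac
  have key : ∀ k h, h + k = n →
      (Even h → alt (fun x y => α x y ∧ γ x y) (fun x y => α x y ∧ β x y) k (t h a b c) c) ∧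
      (Odd h → alt (fun x y => α x y ∧ β x y) (fun x y => α x y ∧ γ x y) k (t h a b c) c) := by
    intro k
    induction k with
    | zero =>
      intro h hh
      have : h = n := by omega
      subst this
      exact ⟨fun _ => h5 a b c, fun _ => h5 a b c⟩
    | succ k ih =>
      intro h hh
      have hhn : h < n := by omega
      have hα1 : α (t h a b c) (t (h + 1) a b c) :=
        hα.trans (hz h hhn.le) (hα.symm (hz (h + 1) (by omega)))
      constructor
      · intro heven
        refine ⟨t (h + 1) a b c, ⟨hα1, ?_⟩, (ih (h + 1) (by omega)).2 (Even.add_one heven)⟩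
        have g1 : γ (t h a b c) (t h a b b) :=
          hcγ h hhn.le a a b b c b (hγ.refl a) (hγ.refl b) (hγ.symm hbc)
        have g2 : γ (t (h + 1) a b b) (t (h + 1) a b c) :=
          hcγ (h + 1) (by omega) a a b b b c (hγ.refl a) (hγ.refl b) hbc
        rw [h3 h hhn heven] at g1
        exact hγ.trans g1 g2
      · intro hodd
        refine ⟨t (h + 1) a b c, ⟨hα1, ?_⟩, (ih (h + 1) (by omega)).1 (Odd.add_one hodd)⟩
        have g1 : β (t h a b c) (t h a a c) :=
          hcβ h hhn.le a a b a c c (hβ.refl a) (hβ.symm hab) (hβ.refl c)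
        have g2 : β (t (h + 1) a a c) (t (h + 1) a b c) :=
          hcβ (h + 1) (by omega) a a a b c c (hβ.refl a) hab (hβ.refl c)
        rw [h4 h hhn hodd] at g1
        exact hβ.trans g1 g2
  have := (key n 0 (by omega)).1 Even.zero
  rwa [h2] at this
end

section
/- Let s₁ : A → A → A → A satisfy s₁(x,z,z) = x for all x,z. Suppose that for every reflexive binary relation R on A compatible with s₁, and every (a,c) with (a,c) ∈ X₁ ∘ ⋯ ∘ Xₘ where each Xⱼ is either R or its converse R˘, one has (a, s₁(a,a,c)) ∈ R. Define s₁*(x,y,z) = s₁(x, s₁(x,y,y), s₁(x,y,z)). Then for every reflexive R compatible with s₁, and every (a,c) ∈ X₁ ∘ ⋯ ∘ Xₘ ∘ R with each Xⱼ equal to R or R˘, one has (a, s₁*(a,a,c)) ∈ R. -/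
variable {A : Type*}

theorem stmt17 {A : Type*} (m : ℕ) (s1 : A → A → A → A)
    (hid : ∀ x z : A, s1 x z z = x)
    (H : ∀ R : A → A → Prop, Reflexive R → Compat3 R s1 →
      ∀ X : ℕ → A → A → Prop, (∀ j, j < m → X j = R ∨ X j = conv R) →
        ∀ a c : A, chain X m a c → R a (s1 a a c)) :
    ∀ R : A → A → Prop, Reflexive R → Compat3 R s1 →
      ∀ X : ℕ → A → A → Prop, (∀ j, j < m → X j = R ∨ X j = conv R) →
        ∀ a c : A, Comp (chain X m) R a c →
          R a ((fun x y z => s1 x (s1 x y y) (s1 x y z)) a a c) := by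
  intro R hR hC X hX a c ⟨b, hab, hbc⟩
  simp only
  -- converse trick: R (s1 a a b) a
  have hconv : conv R a (s1 a a b) := by
    refine H (conv R) (fun x => hR x) (fun x x' y y' z z' h1 h2 h3 => hC _ _ _ _ _ _ h1 h2 h3)
      X ?_ a b hab
    intro j hj
    rcases hX j hj with h | h
    · exact Or.inr h
    · exact Or.inl h
  have hu : R (s1 a a b) a := hconv
  have hud : R (s1 a a b) (s1 a a c) := hC _ _ _ _ _ _ (hR a) (hR a) hbc
  have key : R (s1 a (s1 a a b) (s1 a a b)) (s1 a a (s1 a a c)) :=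
    hC _ _ _ _ _ _ (hR a) hu hud
  rw [hid] at key
  rw [hid a a]
  exact key
end

section
/- Let s₁ : A → A → A → A satisfy s₁(x,z,z) = x and s₁(x,x,x) = x. Suppose that for every reflexive binary relation R on A compatible with s₁ and every (a,c) ∈ X₁ ∘ ⋯ ∘ Xₘ₋₁ ∘ R (each Xⱼ being R or R˘), one has (a, s₁(a,a,c)) ∈ R. Define s₁*(x,y,z) = s₁(x, s₁(x,y,y), s₁(x,y,z)). Then for every reflexive R compatible with s₁ and every (a,c) ∈ X₁ ∘ ⋯ ∘ Xₘ with each Xⱼ equal to R or R˘ (the last factor now arbitrary), one has (a, s₁*(a,a,c)) ∈ R. -/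
variable {A : Type*}

/-- Pointwise equal lists of relations give the same chain. -/
lemma chain_congr {A : Type*} {Z Z' : ℕ → A → A → Prop} :
    ∀ n, (∀ j, j < n → Z j = Z' j) → ∀ a c, chain Z n a c → chain Z' n a c := by
  intro n
  induction n with
  | zero => intro _ a c h; exact h
  | succ n ih =>
    rintro h a c ⟨b, hab, hbc⟩
    exact ⟨b, ih (fun j hj => h j (by omega)) a b hab, (h n (by omega)) ▸ hbc⟩

/-- Peel the first factor off a chain. -/
lemma chain_cons {A : Type*} {X : ℕ → A → A → Prop} :
    ∀ n a c, chain X (n + 1) a c →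
      ∃ b, X 0 a b ∧ chain (fun j => X (j + 1)) n b c := by
  intro n
  induction n with
  | zero =>
    rintro a c ⟨b, hab, hbc⟩
    cases hab
    exact ⟨c, hbc, rfl⟩
  | succ n ih =>
    rintro a c ⟨d, had, hdc⟩
    obtain ⟨b, h0, hbd⟩ := ih a d had
    exact ⟨b, h0, ⟨d, hbd, hdc⟩⟩

/-- Applying `s1 x y ·` coordinatewise preserves chains of factors `R`, `R˘`. -/
lemma chain_map {A : Type*} {R : A → A → Prop} {s1 : A → A → A → A}
    (hR : Reflexive R) (hC : Compat3 R s1) (x y : A) :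
    ∀ (Z : ℕ → A → A → Prop) n, (∀ j, j < n → Z j = R ∨ Z j = conv R) →
      ∀ u v, chain Z n u v → chain Z n (s1 x y u) (s1 x y v) := by
  intro Z n
  induction n with
  | zero => rintro _ u v rfl; rfl
  | succ n ih =>
    rintro h u v ⟨b, hub, hbv⟩
    refine ⟨s1 x y b, ih (fun j hj => h j (by omega)) u b hub, ?_⟩
    rcases h n (by omega) with hz | hz
    · rw [hz] at hbv ⊢
      exact hC x x y y b v (hR x) (hR y) hbv
    · rw [hz] at hbv ⊢
      exact hC x x y y v b (hR x) (hR y) hbv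

theorem stmt18 {A : Type*} (m : ℕ) (hm : 1 ≤ m) (s1 : A → A → A → A)
    (hid : ∀ x z : A, s1 x z z = x) (hid2 : ∀ x : A, s1 x x x = x)
    (H : ∀ R : A → A → Prop, Reflexive R → Compat3 R s1 →
      ∀ X : ℕ → A → A → Prop, (∀ j, j < m - 1 → X j = R ∨ X j = conv R) →
        ∀ a c : A, Comp (chain X (m - 1)) R a c → R a (s1 a a c)) :
    ∀ R : A → A → Prop, Reflexive R → Compat3 R s1 →
      ∀ X : ℕ → A → A → Prop, (∀ j, j < m → X j = R ∨ X j = conv R) →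
        ∀ a c : A, chain X m a c →
          R a ((fun x y z => s1 x (s1 x y y) (s1 x y z)) a a c) := by
  obtain ⟨k, rfl⟩ : ∃ k, m = k + 1 := ⟨m - 1, (Nat.succ_pred_eq_of_pos hm).symm⟩
  simp only [Nat.add_sub_cancel] at H
  intro R hR hC X hX a c hac
  obtain ⟨b, hab, hbc⟩ := hac
  show R a (s1 a (s1 a a a) (s1 a a c))
  rw [hid2 a]
  -- goal: R a (s1 a a (s1 a a c))
  rcases hX k (by omega) with hk | hk
  · -- last factor is R
    rw [hk] at hbc
    have hQ : R a (s1 a a c) :=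
      H R hR hC X (fun j hj => hX j (by omega)) a c ⟨b, hab, hbc⟩
    have := hC a a a a a (s1 a a c) (hR a) (hR a) hQ
    rwa [hid2 a] at this
  · -- last factor is conv R, i.e. R c b
    rw [hk] at hbc
    have hcb : R c b := hbc
    cases k with
    | zero =>
      -- m = 1 : here b = a and R c a
      cases hab
      have h1 : R (s1 a a c) (s1 a a a) := hC a a a a c a (hR a) (hR a) hcb
      rw [hid2 a] at h1
      have h2 : R (s1 a (s1 a a c) (s1 a a c)) (s1 a a (s1 a a c)) :=
        hC a a (s1 a a c) a (s1 a a c) (s1 a a c) (hR a) h1 (hR _)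
      rwa [hid a (s1 a a c)] at h2
    | succ k' =>
      obtain ⟨b1, hX0, h1b⟩ := chain_cons k' a b hab
      set X' : ℕ → A → A → Prop := fun j => X (j + 1) with hX'def
      have hX' : ∀ j, j < k' + 1 → X' j = R ∨ X' j = conv R :=
        fun j hj => hX (j + 1) (by omega)
      rcases hX 0 (by omega) with h0 | h0
      · -- first factor is R : R a b1
        rw [h0] at hX0
        set Y : ℕ → A → A → Prop := fun j => if j = k' then conv R else X (j + 1)
          with hYdef
        have hY : ∀ j, j < k' + 1 → Y j = R ∨ Y j = conv R := by
          intro j hj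
          by_cases hjk : j = k'
          · right; simp [hYdef, hjk]
          · simp only [hYdef, if_neg hjk]; exact hX (j + 1) (by omega)
        have hmap : chain X' k' (s1 a b1 b1) (s1 a b1 b) :=
          chain_map hR hC a b1 X' k' (fun j hj => hX' j (by omega)) b1 b h1b
        rw [hid a b1] at hmap
        have hchainY : chain Y k' a (s1 a b1 b) :=
          chain_congr k' (fun j hj => by simp [hYdef, hX'def, Nat.ne_of_lt hj])
            a (s1 a b1 b) hmap
        have hlast : Y k' (s1 a b1 b) (s1 a a c) := by
          show (if k' = k' then conv R else X (k' + 1)) (s1 a b1 b) (s1 a a c)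
          rw [if_pos rfl]
          exact hC a a a b1 c b (hR a) hX0 hcb
        have hQ : R a (s1 a a (s1 a a c)) :=
          H R hR hC Y hY a (s1 a a c) ⟨s1 a a c, ⟨s1 a b1 b, hchainY, hlast⟩, hR _⟩
        exact hQ
      · -- first factor is conv R : R b1 a
        rw [h0] at hX0
        have hb1a : R b1 a := hX0
        have hfull : chain X' (k' + 1) b1 c := ⟨b, h1b, show X (k' + 1) b c from hk ▸ hbc⟩
        have hmap : chain X' (k' + 1) (s1 a b1 b1) (s1 a b1 c) :=
          chain_map hR hC a b1 X' (k' + 1) hX' b1 c hfull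
        rw [hid a b1] at hmap
        have hpQ : R (s1 a b1 c) (s1 a a c) :=
          hC a a b1 a c c (hR a) hb1a (hR c)
        exact H R hR hC X' hX' a (s1 a a c) ⟨s1 a b1 c, hmap, hpQ⟩
end
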